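/- For real numbers ℓmin, ℓmax with 0 < ℓmin ≤ ℓmax and speedup s > 1, let γ = max{⌈(ℓmax − s·ℓmin)/((s−1)·ℓmin)⌉, 0}. Then for every non-negative integer κ < γ, (κ·ℓmin + ℓmax)/s > (κ+1)·ℓmin. -/

import Mathlib

theorem succ_mul_lt_add_div_iff {lmin lmax s : ℝ} (h0 : 0 < lmin) (hs : 1 < s) (κ : ℝ) :
    (κ + 1) * lmin < (κ * lmin + lmax) / s ↔ κ < (lmax - s * lmin) / ((s - 1) * lmin) := by
  have hden : 0 < (s - 1) * lmin := mul_pos (sub_pos.mpr hs) h0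
  rw [lt_div_iff₀ (zero_lt_one.trans hs), lt_div_iff₀ hden]
  constructor <;> intro h <;> linarith

theorem stmt_2_general (lmin lmax s : ℝ) (h0 : 0 < lmin) (hs : 1 < s) :
    let γ : ℤ := max ⌈(lmax - s * lmin) / ((s - 1) * lmin)⌉ 0
    ∀ κ : ℤ, 0 ≤ κ → κ < γ → ((κ : ℝ) * lmin + lmax) / s > ((κ : ℝ) + 1) * lmin := by
  intro γ κ hκ0 hκγ
  have hκ : κ < ⌈(lmax - s * lmin) / ((s - 1) * lmin)⌉ :=
    (lt_max_iff.mp hκγ).resolve_right hκ0.not_gt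
  exact (succ_mul_lt_add_div_iff h0 hs κ).mpr (Int.lt_ceil.mp hκ)

theorem stmt_2 (lmin lmax s : ℝ) (h0 : 0 < lmin) (h1 : lmin ≤ lmax) (hs : 1 < s) :
    let γ : ℤ := max ⌈(lmax - s * lmin) / ((s - 1) * lmin)⌉ 0
    ∀ κ : ℤ, 0 ≤ κ → κ < γ → ((κ : ℝ) * lmin + lmax) / s > ((κ : ℝ) + 1) * lmin :=
  stmt_2_general lmin lmax s h0 hs
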